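/- arXiv:1009.3483 — 8 statements merged into one kernel-verified Lean document; each statement's English description precedes it below -/
import Mathlib

section
/- In a commutative hypergroup (X, #), 0 # a = {a} for every a ∈ X. -/
/-- Hyperaddition of two sets: `A # B = ⋃_{a∈A, b∈B} a # b`. -/
def hSum {V : Type*} (hadd : V → V → Set V) (A B : Set V) : Set V :=
  ⋃ a ∈ A, ⋃ b ∈ B, hadd a b

/-- A commutative hypergroup. -/
structure CommHypergroup (V : Type*) where
  hadd : V → V → Set V
  hadd_nonempty : ∀ a b, (hadd a b).Nonempty
  hadd_comm : ∀ a b, hadd a b = hadd b a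
  hadd_assoc : ∀ a b c, hSum hadd {a} (hadd b c) = hSum hadd (hadd a b) {c}
  zero : V
  neg : V → V
  neg_spec : ∀ a, zero ∈ hadd a (neg a) ∧ zero ∈ hadd (neg a) a
  neg_unique : ∀ a b, zero ∈ hadd a b → zero ∈ hadd b a → b = neg a
  mem_shift : ∀ a b c, a ∈ hadd b c → b ∈ hadd a (neg c)

/-- A hyperfield: hyperaddition, ordinary multiplication. -/
structure Hyperfield (F : Type*) extends CommHypergroup F where
  mul : F → F → F
  mul_assoc' : ∀ a b c, mul (mul a b) c = mul a (mul b c)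
  mul_comm' : ∀ a b, mul a b = mul b a
  distrib : ∀ a b c, (mul a) '' (hadd b c) = hadd (mul a b) (mul a c)
  mul_zero' : ∀ a, mul a zero = zero
  one : F
  mul_one' : ∀ a, mul a one = a
  mul_inv' : ∀ a, a ≠ zero → ∃ b, mul a b = one

/-- A hypervector space over a hyperfield `K`. -/
structure HypVecSp (F : Type*) (K : Hyperfield F) (V : Type*) extends CommHypergroup V where
  smul : F → V → Set V
  smul_nonempty : ∀ a α, (smul a α).Nonempty
  smul_hadd : ∀ a α β, (⋃ x ∈ hadd α β, smul a x) ⊆ hSum hadd (smul a α) (smul a β)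
  hadd_smul : ∀ a b α, (⋃ c ∈ K.hadd a b, smul c α) ⊆ hSum hadd (smul a α) (smul b α)
  mul_smul' : ∀ a b α, smul (K.mul a b) α = ⋃ x ∈ smul b α, smul a x
  neg_smul' : ∀ a α, smul (K.neg a) α = smul a (neg α)
  one_smul' : ∀ α, α ∈ smul K.one α
  zero_smul' : ∀ α, zero ∈ smul K.zero α
  zero_smul_zero : smul K.zero zero = {zero}

/-- The hyper-linear combination `λ₁*α₁ # λ₂*α₂ # ⋯ # λₙ*αₙ` of a list of
scalar/vector pairs (the empty combination is `{θ}`, which is neutral for `#`). -/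
def combo {F V : Type*} (hadd : V → V → Set V) (smul : F → V → Set V) (z : V) :
    List (F × V) → Set V
  | [] => {z}
  | p :: l => hSum hadd (smul p.1 p.2) (combo hadd smul z l)

/-- The span of a set `A`: all vectors lying in some finite hyper-linear
combination of elements of `A`. -/
def hspan {F V : Type*} (hadd : V → V → Set V) (smul : F → V → Set V) (z : V)
    (A : Set V) : Set V :=
  {x | ∃ l : List (F × V), l ≠ [] ∧ (∀ p ∈ l, p.2 ∈ A) ∧ x ∈ combo hadd smul z l}

/-- In a commutative hypergroup, `0 # a = {a}` for every `a`. -/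
theorem zero_hadd {X : Type*} (H : CommHypergroup X) (a : X) :
    H.hadd H.zero a = {a} := by
  have negneg : ∀ x : X, H.neg (H.neg x) = x := fun x =>
    (H.neg_unique (H.neg x) x (H.neg_spec x).2 (H.neg_spec x).1).symm
  ext x
  constructor
  · intro hx
    have h1 : H.zero ∈ H.hadd x (H.neg a) := H.mem_shift x H.zero a hx
    have h2 : H.zero ∈ H.hadd (H.neg a) x := by rw [H.hadd_comm]; exact h1
    have := H.neg_unique x (H.neg a) h1 h2
    have : H.neg (H.neg a) = H.neg (H.neg x) := by rw [← this]
    simpa [negneg, eq_comm] using this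
  · intro hx
    have hx' : x = a := hx
    subst hx'
    have := H.mem_shift H.zero x (H.neg x) (H.neg_spec x).1
    simpa [negneg] using this
end

section
/- In an innerproduct hyperspace V over the real hyperfield, for all α, β, γ, δ ∈ V and a, b ∈ ℝ, sup{⟨x, y⟩ : x ∈ α # (a * β), y ∈ γ # (b * δ)} = ⟨α, γ⟩ + a⟨β, γ⟩ + b⟨α, δ⟩ + ab⟨β, δ⟩. -/
/-- The real hyperfield: a hyperfield structure on `ℝ` whose multiplication,
zero and one are the usual ones. -/
structure RealHyperfield extends Hyperfield ℝ where
  zero_eq : zero = 0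
  one_eq : one = 1
  mul_eq : ∀ a b, mul a b = a * b

/-- An innerproduct hyperspace over the real hyperfield. -/
structure InnerHyp (K : RealHyperfield) (V : Type*) extends
    HypVecSp ℝ K.toHyperfield V where
  inner : V → V → ℝ
  inner_pos : ∀ α, α ≠ zero → 0 < inner α α
  inner_self_eq_zero : ∀ α, inner α α = 0 ↔ α = zero
  inner_symm : ∀ α β, inner α β = inner β α
  sup_hadd : ∀ α β γ, IsLUB ((fun x => inner x γ) '' hadd α β) (inner α γ + inner β γ)
  sup_smul : ∀ a α β, IsLUB ((fun x => inner x β) '' smul a α) (a * inner α β)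


section Aux

variable {K : RealHyperfield} {V : Type*} (W : InnerHyp K V)

/-- In a real hyperfield, negation is multiplication by `neg 1`. -/
lemma RH_neg_eq_mul (c : ℝ) : K.neg c = K.mul (K.neg K.one) c := by
  have h0 : K.zero ∈ K.hadd K.one (K.neg K.one) := (K.neg_spec K.one).1
  have hd := K.distrib c K.one (K.neg K.one)
  rw [K.mul_one'] at hd
  have h1 : K.mul c K.zero ∈ K.hadd c (K.mul c (K.neg K.one)) := by
    rw [← hd]; exact ⟨K.zero, h0, rfl⟩
  rw [K.mul_zero'] at h1
  have h2 : K.zero ∈ K.hadd (K.mul c (K.neg K.one)) c := by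
    rw [K.hadd_comm]; exact h1
  have h3 := K.neg_unique c _ h1 h2
  rw [← h3, K.mul_comm']

lemma RH_t_cases : K.neg K.one = 1 ∨ K.neg K.one = -1 := by
  have hinv : K.neg (K.neg K.one) = K.one :=
    (K.neg_unique (K.neg K.one) K.one (K.neg_spec K.one).2 (K.neg_spec K.one).1).symm
  have h := (RH_neg_eq_mul (K := K) (K.neg K.one)).symm.trans hinv
  rw [K.mul_eq, K.one_eq] at h
  rw [K.one_eq]
  exact mul_self_eq_one_iff.mp h

lemma IH_inner_zero_left (c : V) : W.inner W.zero c = 0 := by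
  have h := W.sup_smul K.zero W.zero c
  rw [W.zero_smul_zero, Set.image_singleton] at h
  have h2 := isLUB_singleton.unique h
  have hz : K.zero = (0 : ℝ) := K.zero_eq
  rw [hz, zero_mul] at h2
  exact h2

lemma IH_neg_inner_le (u c : V) :
    W.inner (W.neg u) c ≤ K.neg K.one * W.inner u c := by
  have hmem : W.neg u ∈ W.smul (K.neg K.one) u := by
    have h1 : W.neg u ∈ W.smul K.one (W.neg u) := W.one_smul' (W.neg u)
    rwa [← W.neg_smul'] at h1
  exact (W.sup_smul (K.neg K.one) u c).1 ⟨_, hmem, rfl⟩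

lemma IH_neg_inner_ge (u c : V) : -(W.inner u c) ≤ W.inner (W.neg u) c := by
  have h : W.inner W.zero c ≤ W.inner u c + W.inner (W.neg u) c :=
    (W.sup_hadd u (W.neg u) c).1 ⟨W.zero, (W.neg_spec u).1, rfl⟩
  rw [IH_inner_zero_left] at h
  linarith

lemma IH_inner_nonneg (ht : K.neg K.one = 1) (u c : V) : 0 ≤ W.inner u c := by
  have h1 := IH_neg_inner_ge W u c
  have h2 := IH_neg_inner_le W u c
  rw [ht, one_mul] at h2
  linarith

lemma IH_inner_all_zero (ht : K.neg K.one = 1) (u c : V) : W.inner u c = 0 := by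
  have hpos := IH_inner_nonneg W ht u c
  obtain ⟨w, hw⟩ := W.smul_nonempty (-1) u
  have h3 : W.inner w c ≤ -1 * W.inner u c := (W.sup_smul (-1) u c).1 ⟨w, hw, rfl⟩
  have h4 := IH_inner_nonneg W ht w c
  linarith

lemma IH_inner_hadd_exact (ht : K.neg K.one = -1) (p q x c : V)
    (hx : x ∈ W.hadd p q) : W.inner x c = W.inner p c + W.inner q c := by
  have h1 : W.inner x c ≤ W.inner p c + W.inner q c :=
    (W.sup_hadd p q c).1 ⟨x, hx, rfl⟩
  have h2 : p ∈ W.hadd x (W.neg q) := W.mem_shift x p q hx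
  have h3 : W.inner p c ≤ W.inner x c + W.inner (W.neg q) c :=
    (W.sup_hadd x (W.neg q) c).1 ⟨p, h2, rfl⟩
  have h4 := IH_neg_inner_le W q c
  rw [ht] at h4
  linarith

lemma IH_smul_pair_le (a b : ℝ) (β δ u v : V)
    (hu : u ∈ W.smul a β) (hv : v ∈ W.smul b δ) :
    W.inner u v ≤ a * b * W.inner β δ := by
  have s1 : W.inner u v ≤ a * W.inner β v := (W.sup_smul a β v).1 ⟨u, hu, rfl⟩
  have hub : a * b * W.inner δ β ∈
      upperBounds ((fun x => W.inner x β) '' W.smul a v) := by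
    rintro r ⟨w, hw, rfl⟩
    have hw' : w ∈ W.smul (K.mul a b) δ := by
      rw [W.mul_smul']
      exact Set.mem_biUnion hv hw
    have h := (W.sup_smul (K.mul a b) δ β).1 ⟨w, hw', rfl⟩
    rwa [K.mul_eq] at h
  have s2 : a * W.inner v β ≤ a * b * W.inner δ β := (W.sup_smul a v β).2 hub
  rw [W.inner_symm β v] at s1
  rw [W.inner_symm δ β] at s2
  exact s1.trans s2

lemma mem_hSum_singleton {p x : V} {X : Set V} :
    x ∈ hSum W.hadd {p} X ↔ ∃ u ∈ X, x ∈ W.hadd p u := by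
  simp [hSum]

end Aux

/-- `sup ⟨α # a*β, γ # b*δ⟩ = ⟨α,γ⟩ + a⟨β,γ⟩ + b⟨α,δ⟩ + ab⟨β,δ⟩`. -/
theorem sup_inner_hadd_smul {K : RealHyperfield} {V : Type*} (W : InnerHyp K V)
    (α β γ δ : V) (a b : ℝ) :
    IsLUB {r : ℝ | ∃ x ∈ hSum W.hadd {α} (W.smul a β),
        ∃ y ∈ hSum W.hadd {γ} (W.smul b δ), r = W.inner x y}
      (W.inner α γ + a * W.inner β γ + b * W.inner α δ + a * b * W.inner β δ) := by
  rcases RH_t_cases (K := K) with ht | ht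
  · -- degenerate case: all inner products vanish
    have hz : ∀ u c : V, W.inner u c = 0 := IH_inner_all_zero W ht
    constructor
    · rintro r ⟨x, hx, y, hy, rfl⟩
      rw [hz x y, hz α γ, hz β γ, hz α δ, hz β δ]
      norm_num
    · intro M hM
      obtain ⟨u, hu⟩ := W.smul_nonempty a β
      obtain ⟨x, hx⟩ := W.hadd_nonempty α u
      obtain ⟨v, hv⟩ := W.smul_nonempty b δ
      obtain ⟨y, hy⟩ := W.hadd_nonempty γ v
      have hmem : W.inner x y ∈ {r : ℝ | ∃ x ∈ hSum W.hadd {α} (W.smul a β),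
          ∃ y ∈ hSum W.hadd {γ} (W.smul b δ), r = W.inner x y} :=
        ⟨x, (mem_hSum_singleton W).mpr ⟨u, hu, hx⟩,
         y, (mem_hSum_singleton W).mpr ⟨v, hv, hy⟩, rfl⟩
      have h := hM hmem
      rw [hz x y] at h
      rw [hz α γ, hz β γ, hz α δ, hz β δ]
      linarith
  · -- main case: the inner product is additive along hyperaddition
    have E := IH_inner_hadd_exact W ht
    have keyeq : ∀ u v x y : V, x ∈ W.hadd α u → y ∈ W.hadd γ v →
        W.inner x y = W.inner α γ + W.inner v α + W.inner u γ + W.inner v u := by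
      intro u v x y hxu hyv
      calc W.inner x y = W.inner α y + W.inner u y := E α u x y hxu
        _ = W.inner y α + W.inner y u := by rw [W.inner_symm α y, W.inner_symm u y]
        _ = (W.inner γ α + W.inner v α) + (W.inner γ u + W.inner v u) := by
              rw [E γ v y α hyv, E γ v y u hyv]
        _ = W.inner α γ + W.inner v α + W.inner u γ + W.inner v u := by
              rw [W.inner_symm γ α, W.inner_symm γ u]; ring
    constructor
    · rintro r ⟨x, hx, y, hy, rfl⟩
      obtain ⟨u, hu, hxu⟩ := (mem_hSum_singleton W).mp hx
      obtain ⟨v, hv, hyv⟩ := (mem_hSum_singleton W).mp hy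
      have key := keyeq u v x y hxu hyv
      have b1 : W.inner u γ ≤ a * W.inner β γ := (W.sup_smul a β γ).1 ⟨u, hu, rfl⟩
      have b2 : W.inner v α ≤ b * W.inner δ α := (W.sup_smul b δ α).1 ⟨v, hv, rfl⟩
      rw [W.inner_symm δ α] at b2
      have b3 := IH_smul_pair_le W a b β δ u v hu hv
      rw [W.inner_symm u v] at b3
      linarith
    · intro M hM
      have star : ∀ u ∈ W.smul a β, ∀ v ∈ W.smul b δ,
          W.inner α γ + W.inner v α + W.inner u γ + W.inner v u ≤ M := by
        intro u hu v hv
        obtain ⟨x, hx⟩ := W.hadd_nonempty α u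
        obtain ⟨y, hy⟩ := W.hadd_nonempty γ v
        have hmem : W.inner x y ∈ {r : ℝ | ∃ x ∈ hSum W.hadd {α} (W.smul a β),
            ∃ y ∈ hSum W.hadd {γ} (W.smul b δ), r = W.inner x y} :=
          ⟨x, (mem_hSum_singleton W).mpr ⟨u, hu, hx⟩,
           y, (mem_hSum_singleton W).mpr ⟨v, hv, hy⟩, rfl⟩
        have h := hM hmem
        have key := keyeq u v x y hx hy
        linarith
      -- Step 1: take sup over v for fixed u
      have step1 : ∀ u ∈ W.smul a β,
          W.inner u γ + b * W.inner u δ ≤ M - W.inner α γ - b * W.inner α δ := by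
        intro u hu
        obtain ⟨x, hx⟩ := W.hadd_nonempty α u
        have hub : (M - W.inner α γ - W.inner u γ) ∈
            upperBounds ((fun z => W.inner z x) '' W.smul b δ) := by
          rintro r ⟨v, hv, rfl⟩
          show W.inner v x ≤ M - W.inner α γ - W.inner u γ
          have h1 := star u hu v hv
          have h2 : W.inner x v = W.inner α v + W.inner u v := E α u x v hx
          have h3 : W.inner v x = W.inner x v := W.inner_symm v x
          have h4 : W.inner α v = W.inner v α := W.inner_symm α v
          have h5 : W.inner u v = W.inner v u := W.inner_symm u v
          linarith
        have h6 : b * W.inner δ x ≤ M - W.inner α γ - W.inner u γ :=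
          (W.sup_smul b δ x).2 hub
        have h7 : W.inner δ x = W.inner x δ := W.inner_symm δ x
        have h8 : W.inner x δ = W.inner α δ + W.inner u δ := E α u x δ hx
        rw [h7, h8, mul_add] at h6
        linarith
      -- Step 2: take sup over u for fixed v
      have step2 : ∀ v ∈ W.smul b δ,
          a * W.inner v β ≤ M - W.inner α γ - b * W.inner α δ - a * W.inner β γ := by
        intro v hv
        obtain ⟨y, hy⟩ := W.hadd_nonempty γ v
        have hub : (M - W.inner α γ - b * W.inner α δ) ∈
            upperBounds ((fun z => W.inner z y) '' W.smul a β) := by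
          rintro r ⟨u, hu, rfl⟩
          show W.inner u y ≤ M - W.inner α γ - b * W.inner α δ
          have h1 := step1 u hu
          have h2 : W.inner y u = W.inner γ u + W.inner v u := E γ v y u hy
          have h3 : W.inner u y = W.inner y u := W.inner_symm u y
          have h4 : W.inner γ u = W.inner u γ := W.inner_symm γ u
          have h5 : W.inner v u ≤ b * W.inner δ u := (W.sup_smul b δ u).1 ⟨v, hv, rfl⟩
          rw [W.inner_symm δ u] at h5
          linarith
        have h6 : a * W.inner β y ≤ M - W.inner α γ - b * W.inner α δ :=
          (W.sup_smul a β y).2 hub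
        have h7 : W.inner β y = W.inner y β := W.inner_symm β y
        have h8 : W.inner y β = W.inner γ β + W.inner v β := E γ v y β hy
        rw [h7, h8, mul_add, W.inner_symm γ β] at h6
        linarith
      -- Step 3: conclude via sup over smul (a*b) δ
      have hub3 : (M - W.inner α γ - b * W.inner α δ - a * W.inner β γ) ∈
          upperBounds ((fun z => W.inner z β) '' W.smul (K.mul a b) δ) := by
        rintro r ⟨w, hw, rfl⟩
        show W.inner w β ≤ M - W.inner α γ - b * W.inner α δ - a * W.inner β γ
        rw [W.mul_smul'] at hw
        simp only [Set.mem_iUnion] at hw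
        obtain ⟨v, hv, hwv⟩ := hw
        have h1 : W.inner w β ≤ a * W.inner v β := (W.sup_smul a v β).1 ⟨w, hwv, rfl⟩
        have h2 := step2 v hv
        linarith
      have hfin : K.mul a b * W.inner δ β ≤
          M - W.inner α γ - b * W.inner α δ - a * W.inner β γ :=
        (W.sup_smul (K.mul a b) δ β).2 hub3
      rw [K.mul_eq, W.inner_symm δ β] at hfin
      linarith
end

section
/- (Cauchy–Schwarz for innerproduct hyperspaces) In an innerproduct hyperspace V over the real hyperfield, defining f(α) = √⟨α, α⟩, one has |⟨α, β⟩| ≤ f(α)·f(β) for all α, β ∈ V. -/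
section AuxCS
variable {K : RealHyperfield} {V : Type*} (W : InnerHyp K V)

private lemma cs_inner_le_smul {a : ℝ} {α u : V} (hu : u ∈ W.smul a α) (γ : V) :
    W.inner u γ ≤ a * W.inner α γ :=
  (W.sup_smul a α γ).1 ⟨u, hu, rfl⟩

private lemma cs_inner_le_hadd {α β x : V} (hx : x ∈ W.hadd α β) (γ : V) :
    W.inner x γ ≤ W.inner α γ + W.inner β γ :=
  (W.sup_hadd α β γ).1 ⟨x, hx, rfl⟩

private lemma cs_inner_self_nonneg (α : V) : 0 ≤ W.inner α α := by
  rcases eq_or_ne α W.zero with h | h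
  · rw [(W.inner_self_eq_zero α).mpr h]
  · exact (W.inner_pos α h).le

private lemma cs_inner_zero_left (β : V) : W.inner W.zero β = 0 := by
  have hs : W.smul (0:ℝ) W.zero = {W.zero} := by
    rw [← K.zero_eq]; exact W.zero_smul_zero
  have h := W.sup_smul 0 W.zero β
  rw [hs, Set.image_singleton] at h
  have h2 := (isLUB_singleton (a := W.inner W.zero β)).unique h
  linarith

private lemma cs_key_plus (α β : V) {t : ℝ} (ht : 0 ≤ t) :
    0 ≤ t ^ 2 * W.inner α α + 2 * t * W.inner α β + W.inner β β := by
  obtain ⟨u, hu⟩ := W.smul_nonempty t α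
  obtain ⟨x, hx⟩ := W.hadd_nonempty u β
  have h0 : 0 ≤ W.inner x x := cs_inner_self_nonneg W x
  have h1 : W.inner x x ≤ W.inner u x + W.inner β x := cs_inner_le_hadd W hx x
  have h2 : W.inner x u ≤ W.inner u u + W.inner β u := cs_inner_le_hadd W hx u
  have h3 : W.inner x β ≤ W.inner u β + W.inner β β := cs_inner_le_hadd W hx β
  have h4 : W.inner u β ≤ t * W.inner α β := cs_inner_le_smul W hu β
  have h5 : W.inner u α ≤ t * W.inner α α := cs_inner_le_smul W hu α
  have h6 : W.inner u u ≤ t * W.inner α u := cs_inner_le_smul W hu u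
  have h7 : t * W.inner α u ≤ t * (t * W.inner α α) := by
    have hs := W.inner_symm α u
    nlinarith
  have s1 := W.inner_symm u x
  have s2 := W.inner_symm β x
  have s3 := W.inner_symm β u
  nlinarith

private lemma cs_key_minus (α β : V) {t : ℝ} (ht : 0 ≤ t) :
    0 ≤ t ^ 2 * W.inner α α - 2 * t * W.inner α β + W.inner β β := by
  have main : ∀ ε > (0:ℝ),
      0 ≤ t ^ 2 * W.inner α α - 2 * t * W.inner α β + W.inner β β + 3 * ε := by
    intro ε hε
    obtain ⟨y, hy, hy1, -⟩ :=
      (W.sup_smul t α β).exists_between (b := t * W.inner α β - ε) (by linarith)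
    obtain ⟨u, hu, rfl⟩ := hy
    obtain ⟨z, hz, hz1, -⟩ :=
      (W.sup_smul (-1) β β).exists_between (b := (-1) * W.inner β β - ε) (by linarith)
    obtain ⟨v, hv, rfl⟩ := hz
    simp only at hy1 hz1
    obtain ⟨x, hx⟩ := W.hadd_nonempty u v
    have h0 : 0 ≤ W.inner x x := cs_inner_self_nonneg W x
    have h1 : W.inner x x ≤ W.inner u x + W.inner v x := cs_inner_le_hadd W hx x
    have h2 : W.inner x u ≤ W.inner u u + W.inner v u := cs_inner_le_hadd W hx u
    have h3 : W.inner x v ≤ W.inner u v + W.inner v v := cs_inner_le_hadd W hx v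
    have h5 : W.inner u α ≤ t * W.inner α α := cs_inner_le_smul W hu α
    have h6 : W.inner u u ≤ t * W.inner α u := cs_inner_le_smul W hu u
    have h7 : t * W.inner α u ≤ t * (t * W.inner α α) := by
      have hs := W.inner_symm α u
      nlinarith
    have h8 : W.inner v u ≤ (-1) * W.inner β u := cs_inner_le_smul W hv u
    have h9 : W.inner v v ≤ (-1) * W.inner β v := cs_inner_le_smul W hv v
    have s1 := W.inner_symm u x
    have s2 := W.inner_symm v x
    have s3 := W.inner_symm u v
    have s4 := W.inner_symm β u
    have s5 := W.inner_symm β v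
    nlinarith
  by_contra hcon
  push_neg at hcon
  have := main (-(t ^ 2 * W.inner α α - 2 * t * W.inner α β + W.inner β β) / 6)
    (by linarith)
  linarith

end AuxCS

/-- Cauchy–Schwarz: `|⟨α, β⟩| ≤ √⟨α,α⟩ · √⟨β,β⟩`. -/
theorem cauchy_schwarz {K : RealHyperfield} {V : Type*} (W : InnerHyp K V)
    (α β : V) :
    |W.inner α β| ≤ Real.sqrt (W.inner α α) * Real.sqrt (W.inner β β) := by
  have hA : 0 ≤ W.inner α α := cs_inner_self_nonneg W α
  have hC : 0 ≤ W.inner β β := cs_inner_self_nonneg W β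
  by_cases hz : α = W.zero
  · rw [hz, cs_inner_zero_left]
    simp
    positivity
  · have hA' : 0 < W.inner α α := W.inner_pos α hz
    set t : ℝ := |W.inner α β| / W.inner α α with htdef
    have ht : 0 ≤ t := div_nonneg (abs_nonneg _) hA'.le
    have htA : t * W.inner α α = |W.inner α β| := div_mul_cancel₀ _ hA'.ne'
    have key : 0 ≤ t ^ 2 * W.inner α α - 2 * t * |W.inner α β| + W.inner β β := by
      rcases abs_cases (W.inner α β) with ⟨h1, h2⟩ | ⟨h1, h2⟩
      · rw [h1]; exact cs_key_minus W α β ht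
      · rw [h1]; have := cs_key_plus W α β ht; linarith
    have hBB : W.inner α β ^ 2 ≤ W.inner α α * W.inner β β := by
      nlinarith [sq_abs (W.inner α β), mul_le_mul_of_nonneg_left key hA'.le]
    calc |W.inner α β| = Real.sqrt (W.inner α β ^ 2) := (Real.sqrt_sq_eq_abs _).symm
      _ ≤ Real.sqrt (W.inner α α * W.inner β β) := Real.sqrt_le_sqrt hBB
      _ = Real.sqrt (W.inner α α) * Real.sqrt (W.inner β β) := Real.sqrt_mul hA _
end

section
/- In an innerproduct hyperspace V, setting ‖α‖ = √⟨α, α⟩, one has sup{‖x‖ : x ∈ a * α} ≤ |a|·‖α‖ for all a ∈ ℝ and α ∈ V. -/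
/-- `⟨zero, β⟩ = 0`. -/
lemma hyp_inner_zero_left {K : RealHyperfield} {V : Type*} (W : InnerHyp K V)
    (β : V) : W.inner W.zero β = 0 := by
  have h := W.sup_smul K.zero W.zero β
  rw [W.zero_smul_zero, K.zero_eq, zero_mul] at h
  have himg : ((fun x => W.inner x β) '' {W.zero}) = {W.inner W.zero β} := by
    simp
  rw [himg] at h
  exact isLUB_singleton.unique h

/-- `-⟨α, β⟩ ≤ ⟨neg α, β⟩`. -/
lemma hyp_neg_inner_le {K : RealHyperfield} {V : Type*} (W : InnerHyp K V)
    (α β : V) : -W.inner α β ≤ W.inner (W.neg α) β := by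
  have h := W.sup_hadd α (W.neg α) β
  have hz : W.inner W.zero β ≤ W.inner α β + W.inner (W.neg α) β :=
    h.1 ⟨W.zero, (W.neg_spec α).1, rfl⟩
  rw [hyp_inner_zero_left W β] at hz
  linarith

/-- `sup ‖a * α‖ ≤ |a| ‖α‖` where `‖x‖ = √⟨x,x⟩`. -/
theorem sup_norm_smul_le {K : RealHyperfield} {V : Type*} (W : InnerHyp K V)
    (a : ℝ) (α : V) :
    ∀ x ∈ W.smul a α, Real.sqrt (W.inner x x) ≤ |a| * Real.sqrt (W.inner α α) := by
  intro x hx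
  have hxx : W.inner x x ≤ a * W.inner α x :=
    (W.sup_smul a α x).1 ⟨x, hx, rfl⟩
  have hαα : 0 ≤ W.inner α α := by
    rcases eq_or_ne α W.zero with h | h
    · rw [(W.inner_self_eq_zero α).mpr h]
    · exact le_of_lt (W.inner_pos α h)
  have key : W.inner x x ≤ a ^ 2 * W.inner α α := by
    rcases le_or_gt 0 a with ha | ha
    · have h2 : W.inner x α ≤ a * W.inner α α :=
        (W.sup_smul a α α).1 ⟨x, hx, rfl⟩
      have : a * W.inner α x ≤ a * (a * W.inner α α) := by
        apply mul_le_mul_of_nonneg_left _ ha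
        rw [W.inner_symm α x]; exact h2
      nlinarith
    · -- a < 0
      have h3 : W.inner x (W.neg α) ≤ a * W.inner α (W.neg α) :=
        (W.sup_smul a α (W.neg α)).1 ⟨x, hx, rfl⟩
      have h4 : -W.inner α x ≤ W.inner (W.neg α) x := hyp_neg_inner_le W α x
      have h5 : -W.inner α α ≤ W.inner (W.neg α) α := hyp_neg_inner_le W α α
      have hsym1 : W.inner (W.neg α) x = W.inner x (W.neg α) := W.inner_symm _ _
      have hsym2 : W.inner (W.neg α) α = W.inner α (W.neg α) := W.inner_symm _ _
      -- ⟨α,x⟩ ≥ -⟨x,neg α⟩ ≥ -a⟨α,neg α⟩ ; multiply by a<0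
      nlinarith [mul_le_mul_of_nonpos_left h3 (le_of_lt ha)]
  calc Real.sqrt (W.inner x x) ≤ Real.sqrt (a ^ 2 * W.inner α α) :=
        Real.sqrt_le_sqrt key
    _ = |a| * Real.sqrt (W.inner α α) := by
        rw [Real.sqrt_mul (sq_nonneg a), Real.sqrt_sq_eq_abs]
end

section
/- (Triangle inequality) In an innerproduct hyperspace V, setting ‖α‖ = √⟨α, α⟩, one has sup{‖x‖ : x ∈ α # β} ≤ ‖α‖ + ‖β‖ for all α, β ∈ V. -/
/-!
Cauchy–Schwarz holds in an innerproduct hyperspace: for `t ≥ 0`, any `z ∈ t * α # β` gives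
`0 ≤ ⟨z, z⟩ ≤ t² ⟨α, α⟩ + 2t ⟨α, β⟩ + ⟨β, β⟩` by the two sup axioms, and `⟨-α, β⟩ = -⟨α, β⟩`
extends this to `t < 0`, so the discriminant is nonpositive. The triangle inequality then
follows from `⟨x, x⟩ ≤ ⟨α, x⟩ + ⟨β, x⟩ ≤ (‖α‖ + ‖β‖) ‖x‖` for `x ∈ α # β`.
-/

namespace RealHyperfield

variable (K : RealHyperfield)

theorem zero_mem_hadd_neg (t : ℝ) : (0 : ℝ) ∈ K.hadd t (K.neg t) :=
  K.zero_eq ▸ (K.neg_spec t).1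

theorem neg_eq_mul_neg_one (t : ℝ) : K.neg t = t * K.neg 1 := by
  have hmem : (0 : ℝ) ∈ K.hadd t (t * K.neg 1) := by
    have h := K.distrib t 1 (K.neg 1)
    rw [K.mul_eq, K.mul_eq, mul_one] at h
    exact h ▸ ⟨0, K.zero_mem_hadd_neg 1, by rw [K.mul_eq, mul_zero]⟩
  refine (K.neg_unique t (t * K.neg 1) ?_ ?_).symm
  · rwa [K.zero_eq]
  · rwa [K.zero_eq, K.hadd_comm]

end RealHyperfield

namespace InnerHyp

variable {K : RealHyperfield} {V : Type*} (W : InnerHyp K V)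

theorem inner_le_of_mem_hadd {α β x : V} (γ : V) (hx : x ∈ W.hadd α β) :
    W.inner x γ ≤ W.inner α γ + W.inner β γ :=
  (W.sup_hadd α β γ).1 ⟨x, hx, rfl⟩

theorem inner_le_of_mem_smul {a : ℝ} {α w : V} (γ : V) (hw : w ∈ W.smul a α) :
    W.inner w γ ≤ a * W.inner α γ :=
  (W.sup_smul a α γ).1 ⟨w, hw, rfl⟩

theorem inner_zero_left (γ : V) : W.inner W.zero γ = 0 := by
  have h := W.sup_smul K.zero W.zero γ
  rw [W.zero_smul_zero, Set.image_singleton, K.zero_eq, zero_mul] at h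
  exact isLUB_singleton.unique h

theorem inner_self_nonneg (x : V) : 0 ≤ W.inner x x := by
  by_cases h : x = W.zero
  · exact ((W.inner_self_eq_zero x).2 h).ge
  · exact (W.inner_pos x h).le

/-- `0 ∈ t # (-t)` in `K` gives `W.zero ∈ t * γ # (-t) * γ`, hence `0 ≤ (1 + K.neg 1) t ⟨γ, δ⟩` for
every `t`; this disposes of a hyperfield in which `K.neg 1 = 1`. -/
theorem one_add_neg_one_mul_inner (γ δ : V) : (1 + K.neg 1) * W.inner γ δ = 0 := by
  have key : ∀ t : ℝ, 0 ≤ t * ((1 + K.neg 1) * W.inner γ δ) := by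
    intro t
    have hzero : W.zero ∈ W.smul 0 γ := K.zero_eq ▸ W.zero_smul' γ
    have hmem : W.zero ∈ hSum W.hadd (W.smul t γ) (W.smul (K.neg t) γ) :=
      W.hadd_smul t (K.neg t) γ (Set.mem_biUnion (K.zero_mem_hadd_neg t) hzero)
    simp only [hSum, Set.mem_iUnion] at hmem
    obtain ⟨w, hw, w', hw', hz⟩ := hmem
    have hz_le := W.inner_le_of_mem_hadd δ hz
    have hw_le := W.inner_le_of_mem_smul δ hw
    have hw'_le := W.inner_le_of_mem_smul δ hw'
    rw [W.inner_zero_left] at hz_le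
    rw [K.neg_eq_mul_neg_one] at hw'_le
    linarith
  linarith [key 1, key (-1)]

theorem inner_neg_left (β γ : V) : W.inner (W.neg β) γ = -W.inner β γ := by
  have hle : W.inner (W.neg β) γ ≤ K.neg 1 * W.inner β γ := by
    refine W.inner_le_of_mem_smul γ ?_
    have h := W.one_smul' (W.neg β)
    rwa [← W.neg_smul', K.one_eq] at h
  have hge := W.inner_le_of_mem_hadd γ (W.neg_spec β).1
  rw [W.inner_zero_left] at hge
  linarith [W.one_add_neg_one_mul_inner β γ]

theorem inner_quadratic_nonneg_of_nonneg (α β : V) {t : ℝ} (ht : 0 ≤ t) :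
    0 ≤ W.inner α α * (t * t) + 2 * W.inner α β * t + W.inner β β := by
  obtain ⟨w, hw⟩ := W.smul_nonempty t α
  obtain ⟨z, hz⟩ := W.hadd_nonempty w β
  have hαz : W.inner α z ≤ t * W.inner α α + W.inner α β := by
    rw [W.inner_symm α z, W.inner_symm α β]
    linarith [W.inner_le_of_mem_hadd α hz, W.inner_le_of_mem_smul α hw]
  have hβz : W.inner β z ≤ t * W.inner α β + W.inner β β := by
    rw [W.inner_symm β z]
    linarith [W.inner_le_of_mem_hadd β hz, W.inner_le_of_mem_smul β hw]
  have hzz : W.inner z z ≤ t * W.inner α z + W.inner β z := by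
    linarith [W.inner_le_of_mem_hadd z hz, W.inner_le_of_mem_smul z hw]
  nlinarith [W.inner_self_nonneg z, mul_le_mul_of_nonneg_left hαz ht]

theorem inner_quadratic_nonneg (α β : V) (t : ℝ) :
    0 ≤ W.inner α α * (t * t) + 2 * W.inner α β * t + W.inner β β := by
  rcases le_total 0 t with ht | ht
  · exact W.inner_quadratic_nonneg_of_nonneg α β ht
  · have h := W.inner_quadratic_nonneg_of_nonneg (W.neg α) β (neg_nonneg.2 ht)
    rw [W.inner_neg_left, W.inner_symm α (W.neg α), W.inner_neg_left, W.inner_neg_left] at h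
    linarith

theorem abs_inner_le_sqrt_mul_sqrt (α β : V) :
    |W.inner α β| ≤ √(W.inner α α) * √(W.inner β β) := by
  have hdisc := discrim_le_zero (W.inner_quadratic_nonneg α β)
  rw [← Real.sqrt_mul (W.inner_self_nonneg α)]
  refine Real.abs_le_sqrt ?_
  rw [discrim] at hdisc
  linarith

end InnerHyp

/-- Triangle inequality: `sup ‖α # β‖ ≤ ‖α‖ + ‖β‖` where `‖x‖ = √⟨x,x⟩`. -/
theorem sup_norm_hadd_le {K : RealHyperfield} {V : Type*} (W : InnerHyp K V)
    (α β : V) :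
    ∀ x ∈ W.hadd α β,
      Real.sqrt (W.inner x x) ≤ Real.sqrt (W.inner α α) + Real.sqrt (W.inner β β) := by
  intro x hx
  rcases (Real.sqrt_nonneg (W.inner x x)).eq_or_lt with hs | hs
  · rw [← hs]
    positivity
  set s := √(W.inner x x)
  refine le_of_mul_le_mul_right ?_ hs
  calc s * s = W.inner x x := Real.mul_self_sqrt (W.inner_self_nonneg x)
    _ ≤ W.inner α x + W.inner β x := W.inner_le_of_mem_hadd x hx
    _ ≤ √(W.inner α α) * s + √(W.inner β β) * s := by
      gcongr
      · exact (le_abs_self _).trans (W.abs_inner_le_sqrt_mul_sqrt α x)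
      · exact (le_abs_self _).trans (W.abs_inner_le_sqrt_mul_sqrt β x)
    _ = (√(W.inner α α) + √(W.inner β β)) * s := by ring
end

section
/- (Parallelogram inequality) In an innerproduct hyperspace V with induced norm ‖α‖ = √⟨α, α⟩, one has sup{‖x‖² : x ∈ α # β} + sup{‖x‖² : x ∈ α # (−β)} ≤ 2‖α‖² + 2‖β‖² for all α, β ∈ V. -/
/-- Parallelogram inequality:
`sup ‖α # β‖² + sup ‖α # (−β)‖² ≤ 2‖α‖² + 2‖β‖²`, where `‖x‖² = ⟨x,x⟩`. -/
theorem parallelogram_ineq {K : RealHyperfield} {V : Type*} (W : InnerHyp K V)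
    (α β : V) :
    ∀ x ∈ W.hadd α β, ∀ y ∈ W.hadd α (W.neg β),
      W.inner x x + W.inner y y ≤ 2 * W.inner α α + 2 * W.inner β β := by
  classical
  set c := K.neg K.one with hc
  have smul_le : ∀ (a : ℝ) (δ γ : V), ∀ x ∈ W.smul a δ,
      W.inner x γ ≤ a * W.inner δ γ := fun a δ γ x hx =>
    (W.sup_smul a δ γ).1 ⟨x, hx, rfl⟩
  have hadd_le : ∀ (δ ε γ : V), ∀ x ∈ W.hadd δ ε,
      W.inner x γ ≤ W.inner δ γ + W.inner ε γ := fun δ ε γ x hx =>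
    (W.sup_hadd δ ε γ).1 ⟨x, hx, rfl⟩
  have inner_zero : ∀ γ : V, W.inner W.zero γ = 0 := by
    intro γ
    have h := W.sup_smul K.zero W.zero γ
    rw [W.zero_smul_zero] at h
    have h1 : W.inner W.zero γ ≤ K.zero * W.inner W.zero γ :=
      h.1 ⟨W.zero, rfl, rfl⟩
    have h2 : K.zero * W.inner W.zero γ ≤ W.inner W.zero γ := by
      apply h.2
      rintro r ⟨x, hx, rfl⟩
      rw [Set.mem_singleton_iff] at hx
      rw [hx]
    rw [K.zero_eq, zero_mul] at h1 h2
    linarith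
  have hnegmem : ∀ δ : V, W.neg δ ∈ W.smul c δ := by
    intro δ
    rw [hc, W.neg_smul']
    exact W.one_smul' (W.neg δ)
  have vneg_le : ∀ δ γ : V, W.inner (W.neg δ) γ ≤ c * W.inner δ γ :=
    fun δ γ => smul_le c δ γ _ (hnegmem δ)
  have neg_neg_v : ∀ δ : V, W.neg (W.neg δ) = δ := fun δ =>
    (W.neg_unique (W.neg δ) δ (W.neg_spec δ).2 (W.neg_spec δ).1).symm
  have h0K : K.zero ∈ K.hadd K.one c := (K.neg_spec K.one).1
  have hcc : c * c = 1 := by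
    have hone : K.one = K.neg c :=
      K.neg_unique c K.one (by rw [K.hadd_comm]; exact h0K) h0K
    have hz : K.zero ∈ K.mul c '' K.hadd K.one c := ⟨K.zero, h0K, K.mul_zero' c⟩
    rw [K.distrib, K.mul_one'] at hz
    have hz' : K.zero ∈ K.hadd (K.mul c c) c := by rw [K.hadd_comm]; exact hz
    have hmm : K.mul c c = K.neg c := K.neg_unique c (K.mul c c) hz hz'
    rw [← K.mul_eq c c, hmm, ← hone, K.one_eq]
  rcases mul_self_eq_one_iff.mp hcc with h1 | hm1
  · -- degenerate case c = 1 : every vector is zero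
    have hall : ∀ γ : V, γ = W.zero := by
      intro γ
      by_contra hne
      have hpos := W.inner_pos γ hne
      obtain ⟨u, hu⟩ := W.smul_nonempty (-1) γ
      have huγ : W.inner u γ ≤ (-1) * W.inner γ γ := smul_le (-1) γ γ u hu
      have hz : W.zero ∈ hSum W.hadd (W.smul K.one u) (W.smul c u) := by
        apply W.hadd_smul K.one c u
        exact Set.mem_iUnion₂.mpr ⟨K.zero, h0K, W.zero_smul' u⟩
      simp only [hSum, Set.mem_iUnion, exists_prop] at hz
      obtain ⟨p, hp, q, hq, hzpq⟩ := hz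
      have h0 := hadd_le p q γ W.zero hzpq
      rw [inner_zero] at h0
      have hpγ := smul_le K.one u γ p hp
      have hqγ := smul_le c u γ q hq
      rw [K.one_eq, one_mul] at hpγ
      rw [h1, one_mul] at hqγ
      linarith
    intro x hx y hy
    have hα := hall α
    have hβ := hall β
    have hxz := hall x
    have hyz := hall y
    simp only [hxz, hyz, hα, hβ, inner_zero]
    norm_num
  · -- real case c = -1
    have inner_negv : ∀ δ γ : V, W.inner (W.neg δ) γ = -(W.inner δ γ) := by
      intro δ γ
      have l1 := vneg_le δ γ
      rw [hm1] at l1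
      have l3 := hadd_le δ (W.neg δ) γ W.zero (W.neg_spec δ).1
      rw [inner_zero] at l3
      linarith
    intro x hx y hy
    have hx1 := hadd_le α β x x hx
    have hx2 := hadd_le α β α x hx
    have hx3 := hadd_le α β β x hx
    have hy1 := hadd_le α (W.neg β) y y hy
    have hy2 := hadd_le α (W.neg β) α y hy
    have hy3 := hadd_le α (W.neg β) (W.neg β) y hy
    have s1 := W.inner_symm α x
    have s2 := W.inner_symm β x
    have s3 := W.inner_symm α y
    have s4 := W.inner_symm (W.neg β) y
    have s5 := W.inner_symm β α
    have e1 := inner_negv β α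
    have e3 := inner_negv β (W.neg β)
    have e4 := W.inner_symm β (W.neg β)
    have e5 := inner_negv β β
    have e6 := W.inner_symm α (W.neg β)
    linarith
end

section
/- (Gram–Schmidt step orthogonality) Let V be an innerproduct hyperspace, {v₁, ..., v_{k−1}} pairwise orthogonal non-zero vectors, and w_k ∈ V. If v_k ∈ w_k # (−∑_{j=1}^{k−1} (⟨w_k, v_j⟩/‖v_j‖²) * v_j), then ⟨v_k, v_i⟩ = 0 for all 1 ≤ i ≤ k−1. -/
namespace CommHypergroup

variable {V : Type*} (H : CommHypergroup V)

lemma negneg (a : V) : H.neg (H.neg a) = a :=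
  (H.neg_unique (H.neg a) a (H.neg_spec a).2 (H.neg_spec a).1).symm

lemma neg_mem_hadd {s x y : V} (hs : s ∈ H.hadd x y) :
    H.neg s ∈ H.hadd (H.neg x) (H.neg y) := by
  have h1 : s ∈ H.hadd y x := by rwa [H.hadd_comm]
  have h2 : y ∈ H.hadd s (H.neg x) := H.mem_shift s y x h1
  have h3 : y ∈ H.hadd (H.neg x) s := by rwa [H.hadd_comm] at h2
  have h4 : H.neg x ∈ H.hadd y (H.neg s) := H.mem_shift y (H.neg x) s h3
  have h5 : H.neg x ∈ H.hadd (H.neg s) y := by rwa [H.hadd_comm] at h4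
  exact H.mem_shift (H.neg x) (H.neg s) y h5

lemma neg_zero' : H.neg H.zero = H.zero := by
  have h1 : H.zero ∈ H.hadd H.zero (H.neg H.zero) := (H.neg_spec H.zero).1
  have h2 : H.zero ∈ H.hadd H.zero (H.neg (H.neg H.zero)) :=
    H.mem_shift H.zero H.zero (H.neg H.zero) h1
  rw [H.negneg] at h2
  exact (H.neg_unique H.zero H.zero h2 h2).symm

end CommHypergroup

lemma RealHyperfield.key_neg (K : RealHyperfield) (a : ℝ) :
    K.mul a (K.neg K.one) = K.neg a := by
  have hd := K.distrib a K.one (K.neg K.one)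
  have h0 : K.zero ∈ K.hadd K.one (K.neg K.one) := (K.neg_spec K.one).1
  have h1 : K.mul a K.zero ∈ K.hadd (K.mul a K.one) (K.mul a (K.neg K.one)) := by
    rw [← hd]; exact Set.mem_image_of_mem _ h0
  rw [K.mul_zero', K.mul_one'] at h1
  refine K.neg_unique a _ h1 ?_
  rwa [K.hadd_comm] at h1

lemma RealHyperfield.neg_one_sq (K : RealHyperfield) :
    K.neg K.one = 1 ∨ K.neg K.one = -1 := by
  have h := K.key_neg (K.neg K.one)
  have h2 : K.neg (K.neg K.one) = K.one :=
    CommHypergroup.negneg K.toHyperfield.toCommHypergroup K.one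
  rw [h2, K.mul_eq, K.one_eq] at h
  rw [K.one_eq]
  exact mul_self_eq_one_iff.mp h

section InnerHypLemmas

variable {K : RealHyperfield} {V : Type*}

lemma InnerHyp.inner_zero_left_s13 (W : InnerHyp K V) (β : V) : W.inner W.zero β = 0 := by
  have h := W.sup_smul K.zero W.zero β
  rw [W.zero_smul_zero, Set.image_singleton] at h
  have h2 := h.unique isLUB_singleton
  rw [K.zero_eq, zero_mul] at h2
  exact h2.symm

lemma InnerHyp.neg_one_eq (W : InnerHyp K V) {α : V} (hα : α ≠ W.zero) :
    K.neg K.one = -1 := by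
  rcases K.neg_one_sq with hn | hn
  · exfalso
    have hneg : ∀ a : ℝ, K.neg a = a := by
      intro a
      have h := K.key_neg a
      rw [hn, K.mul_eq, mul_one] at h
      exact h.symm
    have hsm : W.smul (-1 : ℝ) α = W.smul (-1 : ℝ) (W.neg α) := by
      have h := W.neg_smul' (-1 : ℝ) α
      rwa [hneg] at h
    have hinner : ∀ β, W.inner (W.neg α) β = W.inner α β := by
      intro β
      have h1 := W.sup_smul (-1 : ℝ) α β
      have h2 := W.sup_smul (-1 : ℝ) (W.neg α) β
      rw [← hsm] at h2
      have h3 := h1.unique h2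
      linarith
    obtain ⟨x, hx⟩ := W.smul_nonempty (-1 : ℝ) α
    have hxa : W.inner x α ≤ (-1 : ℝ) * W.inner α α :=
      (W.sup_smul (-1 : ℝ) α α).1 (Set.mem_image_of_mem _ hx)
    have hmem : W.zero ∈ W.hadd α (W.neg α) := (W.neg_spec α).1
    have hle : W.inner W.zero x ≤ W.inner α x + W.inner (W.neg α) x :=
      (W.sup_hadd α (W.neg α) x).1 (Set.mem_image_of_mem _ hmem)
    rw [W.inner_zero_left_s13, hinner x] at hle
    have hsymm := W.inner_symm α x
    have hpos := W.inner_pos α hα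
    linarith
  · exact hn

lemma InnerHyp.combo_inner_le (W : InnerHyp K V) (γ : V) :
    ∀ (l : List (ℝ × V)) (s : V), s ∈ combo W.hadd W.smul W.zero l →
      W.inner s γ ≤ (l.map fun p => p.1 * W.inner p.2 γ).sum := by
  intro l
  induction l with
  | nil =>
    intro s hs
    simp only [combo, Set.mem_singleton_iff] at hs
    subst hs
    simp [W.inner_zero_left_s13]
  | cons p l ih =>
    intro s hs
    simp only [combo, hSum, Set.mem_iUnion, exists_prop] at hs
    obtain ⟨x, hx, y, hy, hsxy⟩ := hs
    have h1 : W.inner s γ ≤ W.inner x γ + W.inner y γ :=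
      (W.sup_hadd x y γ).1 (Set.mem_image_of_mem _ hsxy)
    have h2 : W.inner x γ ≤ p.1 * W.inner p.2 γ :=
      (W.sup_smul p.1 p.2 γ).1 (Set.mem_image_of_mem _ hx)
    have h3 := ih y hy
    simp only [List.map_cons, List.sum_cons]
    linarith

lemma InnerHyp.combo_neg_inner_le (W : InnerHyp K V) (hn1 : K.neg K.one = -1) (γ : V) :
    ∀ (l : List (ℝ × V)) (s : V), s ∈ combo W.hadd W.smul W.zero l →
      W.inner (W.neg s) γ ≤ (l.map fun p => -p.1 * W.inner p.2 γ).sum := by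
  intro l
  induction l with
  | nil =>
    intro s hs
    simp only [combo, Set.mem_singleton_iff] at hs
    subst hs
    rw [CommHypergroup.neg_zero']
    simp [W.inner_zero_left_s13]
  | cons p l ih =>
    intro s hs
    simp only [combo, hSum, Set.mem_iUnion, exists_prop] at hs
    obtain ⟨x, hx, y, hy, hsxy⟩ := hs
    have hnegmem : W.neg s ∈ W.hadd (W.neg x) (W.neg y) :=
      CommHypergroup.neg_mem_hadd _ hsxy
    have h1 : W.inner (W.neg s) γ ≤ W.inner (W.neg x) γ + W.inner (W.neg y) γ :=
      (W.sup_hadd (W.neg x) (W.neg y) γ).1 (Set.mem_image_of_mem _ hnegmem)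
    have hnx : W.neg x ∈ W.smul (-1 : ℝ) x := by
      have h := W.neg_smul' K.one x
      rw [hn1] at h
      rw [h]
      exact W.one_smul' (W.neg x)
    have hnx2 : W.neg x ∈ W.smul (-p.1) p.2 := by
      have h := W.mul_smul' (-1 : ℝ) p.1 p.2
      rw [K.mul_eq, neg_one_mul] at h
      rw [h]
      exact Set.mem_biUnion hx hnx
    have h2 : W.inner (W.neg x) γ ≤ -p.1 * W.inner p.2 γ :=
      (W.sup_smul (-p.1) p.2 γ).1 (Set.mem_image_of_mem _ hnx2)
    have h3 := ih y hy
    simp only [List.map_cons, List.sum_cons]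
    linarith

end InnerHypLemmas

/-- Gram–Schmidt step orthogonality: if `v₁, …, v_m` are pairwise orthogonal
non-zero vectors and `vₖ ∈ wₖ # (−∑ⱼ (⟨wₖ,vⱼ⟩/‖vⱼ‖²) * vⱼ)`, then
`⟨vₖ, vᵢ⟩ = 0` for every `i`. -/
theorem gram_schmidt_step_orthogonal {K : RealHyperfield} {V : Type*}
    (W : InnerHyp K V) {m : ℕ} (v : Fin m → V)
    (hne : ∀ j, v j ≠ W.zero)
    (horth : ∀ i j, i ≠ j → W.inner (v i) (v j) = 0)
    (wk vk : V)
    (h : vk ∈ hSum W.hadd {wk}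
      (W.neg '' combo W.hadd W.smul W.zero
        (List.ofFn fun j => (W.inner wk (v j) / W.inner (v j) (v j), v j)))) :
    ∀ i, W.inner vk (v i) = 0 :=  by
  intro i
  have hn1 : K.neg K.one = -1 := W.neg_one_eq (hne i)
  simp only [hSum, Set.mem_iUnion, Set.mem_singleton_iff, exists_prop,
    Set.mem_image] at h
  obtain ⟨a, rfl, b, ⟨s, hs, rfl⟩, hvk⟩ := h
  set l := List.ofFn fun j => (W.inner a (v j) / W.inner (v j) (v j), v j) with hl
  have hpi : W.inner (v i) (v i) ≠ 0 := ne_of_gt (W.inner_pos (v i) (hne i))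
  have hT : (l.map fun p => p.1 * W.inner p.2 (v i)).sum = W.inner a (v i) := by
    rw [hl, List.map_ofFn, List.sum_ofFn]
    rw [Fintype.sum_eq_single i (fun j hj => by
      simp [Function.comp, horth j i hj])]
    simp only [Function.comp]
    rw [div_mul_cancel₀ _ hpi]
  have hT' : (l.map fun p => -p.1 * W.inner p.2 (v i)).sum = -(W.inner a (v i)) := by
    rw [hl, List.map_ofFn, List.sum_ofFn]
    rw [Fintype.sum_eq_single i (fun j hj => by
      simp [Function.comp, horth j i hj])]
    simp only [Function.comp]
    rw [neg_mul, div_mul_cancel₀ _ hpi]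
  have hup : W.inner vk (v i) ≤ W.inner a (v i) + W.inner (W.neg s) (v i) :=
    (W.sup_hadd a (W.neg s) (v i)).1 (Set.mem_image_of_mem _ hvk)
  have hns := W.combo_neg_inner_le hn1 (v i) l s hs
  have ha_mem : a ∈ W.hadd vk s := by
    have h2 := W.mem_shift vk a (W.neg s) hvk
    rwa [CommHypergroup.negneg _ s] at h2
  have hlow : W.inner a (v i) ≤ W.inner vk (v i) + W.inner s (v i) :=
    (W.sup_hadd vk s (v i)).1 (Set.mem_image_of_mem _ ha_mem)
  have hsle := W.combo_inner_le (v i) l s hs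
  rw [hT] at hsle
  rw [hT'] at hns
  linarith
end

section
/- If {w₁, ..., wₙ} is linearly independent in an innerproduct hyperspace V and v₁, ..., v_{k−1} are non-zero with span{v₁,...,v_{k−1}} = span{w₁,...,w_{k−1}}, then the set w_k # (−∑_{j=1}^{k−1} (⟨w_k, v_j⟩/‖v_j‖²) * v_j) is not equal to {θ}. -/
-- ==================== auxiliary lemmas ====================
section AuxCH
variable {X : Type*} (H : CommHypergroup X)

lemma CH.neg_neg (a : X) : H.neg (H.neg a) = a :=
  (H.neg_unique (H.neg a) a (H.neg_spec a).2 (H.neg_spec a).1).symm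

lemma CH.mem_hadd_zero (a : X) : a ∈ H.hadd a H.zero := by
  have h := H.mem_shift H.zero a (H.neg a) (H.neg_spec a).1
  rw [CH.neg_neg H a] at h
  rwa [H.hadd_comm]

end AuxCH

section Aux
variable {K : RealHyperfield} {V : Type*} (W : InnerHyp K V)

lemma IH.inner_zero (γ : V) : W.inner W.zero γ = 0 := by
  have hz := W.zero_smul_zero
  rw [K.zero_eq] at hz
  have h := W.sup_smul 0 W.zero γ
  rw [hz, Set.image_singleton] at h
  have h2 := h.unique isLUB_singleton
  linarith [h2]

lemma IH.smul_le {a : ℝ} {α y : V} (h : y ∈ W.smul a α) (γ : V) :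
    W.inner y γ ≤ a * W.inner α γ :=
  (W.sup_smul a α γ).1 (Set.mem_image_of_mem _ h)

lemma IH.hadd_le {α β x : V} (h : x ∈ W.hadd α β) (γ : V) :
    W.inner x γ ≤ W.inner α γ + W.inner β γ :=
  (W.sup_hadd α β γ).1 (Set.mem_image_of_mem _ h)

lemma IH.neg_ge (α γ : V) : -(W.inner α γ) ≤ W.inner (W.neg α) γ := by
  have h := (W.sup_hadd α (W.neg α) γ).1 (Set.mem_image_of_mem _ (W.neg_spec α).1)
  have h0 := IH.inner_zero W γ
  linarith

lemma IH.neg_mem_smul (α : V) :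
    W.neg α ∈ W.smul (K.toHyperfield.neg K.toHyperfield.one) α := by
  rw [W.neg_smul']
  exact W.one_smul' (W.neg α)

lemma IH.neg_le (α γ : V) :
    W.inner (W.neg α) γ ≤ (K.toHyperfield.neg K.toHyperfield.one) * W.inner α γ :=
  IH.smul_le W (IH.neg_mem_smul W α) γ

lemma IH.eq_zero_of_inner {x : V} (h : W.inner x x ≤ 0) : x = W.zero := by
  by_contra hne
  exact absurd h (not_le.mpr (W.inner_pos x hne))

lemma RH.neg_eq_mul (K : RealHyperfield) (a : ℝ) :
    K.toHyperfield.mul a (K.toHyperfield.neg K.toHyperfield.one) = K.toHyperfield.neg a := by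
  have h0 : K.toHyperfield.zero ∈
      K.toHyperfield.hadd K.toHyperfield.one (K.toHyperfield.neg K.toHyperfield.one) :=
    (K.toHyperfield.neg_spec _).1
  have h1 := Set.mem_image_of_mem (K.toHyperfield.mul a) h0
  rw [K.toHyperfield.distrib, K.toHyperfield.mul_zero', K.toHyperfield.mul_one'] at h1
  have h2 : K.toHyperfield.zero ∈
      K.toHyperfield.hadd (K.toHyperfield.mul a (K.toHyperfield.neg K.toHyperfield.one)) a := by
    rw [K.toHyperfield.hadd_comm]; exact h1
  exact K.toHyperfield.neg_unique a _ h1 h2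

lemma RH.r1_sq (K : RealHyperfield) :
    (K.toHyperfield.neg K.toHyperfield.one) * (K.toHyperfield.neg K.toHyperfield.one) = 1 := by
  have h := RH.neg_eq_mul K (K.toHyperfield.neg K.toHyperfield.one)
  rw [CH.neg_neg K.toHyperfield.toCommHypergroup] at h
  rw [K.mul_eq] at h
  rw [h]; exact K.one_eq

lemma IH.all_zero (hr : K.toHyperfield.neg K.toHyperfield.one = 1) (α : V) : α = W.zero := by
  have h2 : ∀ β γ : V, 0 ≤ W.inner β γ := by
    intro β γ
    have ha := IH.neg_le W β γ
    rw [hr, one_mul] at ha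
    have hb := IH.neg_ge W β γ
    linarith
  have h3 : ∀ y ∈ W.smul (-1 : ℝ) α, y = W.zero := by
    intro y hy
    apply IH.eq_zero_of_inner W
    have ha := IH.smul_le W hy y
    have hb := h2 α y
    linarith
  have hm : K.toHyperfield.mul (-1) (-1) = K.toHyperfield.one := by
    rw [K.mul_eq, K.one_eq]; norm_num
  have hmem := W.one_smul' α
  rw [← hm, W.mul_smul'] at hmem
  simp only [Set.mem_iUnion] at hmem
  obtain ⟨x, hx, hαx⟩ := hmem
  rw [h3 x hx] at hαx
  apply IH.eq_zero_of_inner W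
  have ha := IH.smul_le W hαx α
  rw [IH.inner_zero W] at ha
  linarith

lemma IH.neg_exact (hr : K.toHyperfield.neg K.toHyperfield.one = -1) (α γ : V) : W.inner (W.neg α) γ = -(W.inner α γ) := by
  have h1 := IH.neg_le W α γ
  rw [hr] at h1
  have h2 := IH.neg_ge W α γ
  linarith

lemma IH.hadd_exact (hr : K.toHyperfield.neg K.toHyperfield.one = -1) {α β x : V} (h : x ∈ W.hadd α β) (γ : V) :
    W.inner x γ = W.inner α γ + W.inner β γ := by
  have h1 := IH.hadd_le W h γ
  have h2 := W.mem_shift x α β h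
  have h3 := IH.hadd_le W h2 γ
  have h4 := IH.neg_exact W hr β γ
  linarith

lemma IH.smul_exact (hr : K.toHyperfield.neg K.toHyperfield.one = -1) {a : ℝ} {α y : V} (h : y ∈ W.smul a α) (γ : V) :
    W.inner y γ = a * W.inner α γ := by
  have h1 := IH.smul_le W h γ
  have h2 : W.neg y ∈
      W.smul (K.toHyperfield.mul (K.toHyperfield.neg K.toHyperfield.one) a) α := by
    rw [W.mul_smul']
    exact Set.mem_biUnion h (IH.neg_mem_smul W y)
  have h3 := IH.smul_le W h2 γ
  rw [K.mul_eq, hr, IH.neg_exact W hr] at h3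
  have h5 : (-1 * a) * W.inner α γ = -(a * W.inner α γ) := by ring
  rw [h5] at h3
  linarith

lemma IH.combo_exact (hr : K.toHyperfield.neg K.toHyperfield.one = -1) : ∀ (l : List (ℝ × V)) (x : V),
    x ∈ combo W.hadd W.smul W.zero l → ∀ γ,
    W.inner x γ = (l.map fun p => p.1 * W.inner p.2 γ).sum := by
  intro l
  induction l with
  | nil =>
    intro x hx γ
    simp only [combo, Set.mem_singleton_iff] at hx
    subst hx
    simp [IH.inner_zero W]
  | cons p l ih =>
    intro x hx γ
    simp only [combo, hSum, Set.mem_iUnion] at hx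
    obtain ⟨y, hy, s, hs, hx⟩ := hx
    rw [List.map_cons, List.sum_cons, IH.hadd_exact W hr hx γ,
        IH.smul_exact W hr hy γ, ih s hs γ]

lemma IH.combo_span (hr : K.toHyperfield.neg K.toHyperfield.one = -1) (M : Submodule ℝ (V → ℝ)) :
    ∀ (l : List (ℝ × V)) (x : V), x ∈ combo W.hadd W.smul W.zero l →
    (∀ p ∈ l, W.inner p.2 ∈ M) → W.inner x ∈ M := by
  intro l
  induction l with
  | nil =>
    intro x hx _
    simp only [combo, Set.mem_singleton_iff] at hx
    subst hx
    have h0 : W.inner W.zero = (0 : V → ℝ) := funext fun γ => IH.inner_zero W γ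
    rw [h0]; exact M.zero_mem
  | cons p l ih =>
    intro x hx hp
    simp only [combo, hSum, Set.mem_iUnion] at hx
    obtain ⟨y, hy, s, hs, hx⟩ := hx
    have hx' : W.inner x = p.1 • W.inner p.2 + W.inner s := by
      funext γ
      rw [Pi.add_apply, Pi.smul_apply, smul_eq_mul,
          IH.hadd_exact W hr hx γ, IH.smul_exact W hr hy γ]
    rw [hx']
    exact M.add_mem (M.smul_mem _ (hp p List.mem_cons_self))
      (ih s hs fun q hq => hp q (List.mem_cons_of_mem p hq))

lemma IH.combo_nonempty : ∀ l : List (ℝ × V), (combo W.hadd W.smul W.zero l).Nonempty := by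
  intro l
  induction l with
  | nil => exact ⟨W.zero, rfl⟩
  | cons p l ih =>
    obtain ⟨y, hy⟩ := W.smul_nonempty p.1 p.2
    obtain ⟨s, hs⟩ := ih
    obtain ⟨t, ht⟩ := W.hadd_nonempty y s
    refine ⟨t, ?_⟩
    simp only [combo, hSum, Set.mem_iUnion]
    exact ⟨y, hy, s, hs, ht⟩

end Aux

section Aux2
variable {K : RealHyperfield} {V : Type*} (W : InnerHyp K V)

lemma IH.neg_zero_eq : W.neg W.zero = W.zero := by
  apply IH.eq_zero_of_inner W
  have h := IH.neg_le W W.zero (W.neg W.zero)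
  rw [IH.inner_zero W] at h
  simpa using h

lemma IH.zero_mem_hadd : W.zero ∈ W.hadd W.zero W.zero := by
  have h := (W.neg_spec W.zero).1
  rwa [IH.neg_zero_eq W] at h

lemma IH.zero_mem_combo :
    ∀ l : List (ℝ × V), (∀ p ∈ l, W.zero ∈ W.smul p.1 p.2) →
      W.zero ∈ combo W.hadd W.smul W.zero l := by
  intro l
  induction l with
  | nil => intro _; rfl
  | cons p l ih =>
    intro hp
    simp only [combo, hSum, Set.mem_iUnion]
    exact ⟨W.zero, hp p List.mem_cons_self, W.zero,
      ih fun q hq => hp q (List.mem_cons_of_mem p hq), IH.zero_mem_hadd W⟩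

lemma IH.one_smul_real (α : V) : α ∈ W.smul (1 : ℝ) α := by
  rw [← K.one_eq]; exact W.one_smul' α

lemma IH.zero_smul_real (α : V) : W.zero ∈ W.smul (0 : ℝ) α := by
  rw [← K.zero_eq]; exact W.zero_smul' α

lemma IH.mem_hadd_zero' (a : V) : a ∈ W.hadd a W.zero :=
  CH.mem_hadd_zero W.toCommHypergroup a

end Aux2


/-- If `w₁, …, wₙ` is linearly independent and `v₁, …, vₖ` are non-zero with
`span{v₁,…,vₖ} = span{w₁,…,wₖ}` (`k < n`), then the Gram–Schmidt step set
`w_{k+1} # (−∑ⱼ (⟨w_{k+1},vⱼ⟩/‖vⱼ‖²) * vⱼ)` is not `{θ}`. -/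
theorem gram_schmidt_step_ne_zero {K : RealHyperfield} {V : Type*}
    (W : InnerHyp K V) {n : ℕ} (w : Fin n → V)
    (hli : ∀ l : Fin n → ℝ,
      W.zero ∈ combo W.hadd W.smul W.zero (List.ofFn fun i => (l i, w i)) →
      ∀ i, l i = 0)
    (k : ℕ) (hk : k < n) (v : Fin k → V)
    (hne : ∀ j, v j ≠ W.zero)
    (hsp : hspan W.hadd W.smul W.zero (Set.range v)
        = hspan W.hadd W.smul W.zero
            (Set.range fun j : Fin k => w ⟨j.1, j.2.trans hk⟩)) :
    hSum W.hadd {w ⟨k, hk⟩}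
      (W.neg '' combo W.hadd W.smul W.zero
        (List.ofFn fun j : Fin k =>
          (W.inner (w ⟨k, hk⟩) (v j) / W.inner (v j) (v j), v j)))
      ≠ {W.zero} := by
  intro hset
  set i₀ : Fin n := ⟨k, hk⟩ with hi₀
  -- an element of the combo set C
  obtain ⟨u, hu⟩ := IH.combo_nonempty W
    (List.ofFn fun j : Fin k => (W.inner (w i₀) (v j) / W.inner (v j) (v j), v j))
  -- zero ∈ hadd (w i₀) (neg u)
  have hzmem : W.zero ∈ W.hadd (w i₀) (W.neg u) := by
    have hsub : W.hadd (w i₀) (W.neg u) ⊆ {W.zero} := by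
      rw [← hset]
      intro t ht
      simp only [hSum, Set.mem_iUnion]
      exact ⟨w i₀, rfl, W.neg u, Set.mem_image_of_mem _ hu, ht⟩
    obtain ⟨t, ht⟩ := W.hadd_nonempty (w i₀) (W.neg u)
    have h := hsub ht
    simp only [Set.mem_singleton_iff] at h
    rwa [← h]
  by_cases hk0 : k = 0
  · -- k = 0 : the combo is {zero}, so w i₀ = zero, contradicting independence
    subst hk0
    have hC : u = W.zero := by
      have : (List.ofFn fun j : Fin 0 =>
          (W.inner (w i₀) (v j) / W.inner (v j) (v j), v j)) = [] := by simp
      rw [this] at hu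
      exact hu
    subst hC
    rw [IH.neg_zero_eq W] at hzmem
    -- w i₀ = zero
    have hw0 : w i₀ = W.zero := by
      have hcomm : W.zero ∈ W.hadd W.zero (w i₀) := by
        rw [W.hadd_comm]; exact hzmem
      have h := W.neg_unique W.zero (w i₀) hcomm hzmem
      rwa [IH.neg_zero_eq W] at h
    classical
    set l : Fin n → ℝ := fun i => if i = i₀ then 1 else 0 with hl
    have hmem : W.zero ∈ combo W.hadd W.smul W.zero (List.ofFn fun i => (l i, w i)) := by
      apply IH.zero_mem_combo W
      intro p hp
      rw [List.mem_ofFn] at hp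
      obtain ⟨i, hi⟩ := hp
      rw [← hi]
      by_cases h : i = i₀
      · simp only [hl, if_pos h, h, hw0]
        exact IH.one_smul_real W W.zero
      · simp only [hl, if_neg h]
        exact IH.zero_smul_real W (w i)
    have hfin := hli l hmem i₀
    rw [hl] at hfin
    simp at hfin
  · rcases mul_self_eq_one_iff.mp (RH.r1_sq K) with hr | hr
    · exact absurd (IH.all_zero W hr (v ⟨0, Nat.pos_of_ne_zero hk0⟩))
        (hne ⟨0, Nat.pos_of_ne_zero hk0⟩)
    · -- main case
      have hwu : ∀ γ, W.inner u γ = W.inner (w i₀) γ := by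
        intro γ
        have h := IH.hadd_exact W hr hzmem γ
        rw [IH.inner_zero W, IH.neg_exact W hr] at h
        linarith
      set g : Fin k → (V → ℝ) := fun j => W.inner (w ⟨j.1, j.2.trans hk⟩) with hg
      set M := Submodule.span ℝ (Set.range g) with hM
      have hvM : ∀ j : Fin k, W.inner (v j) ∈ M := by
        intro j
        have hvsp : v j ∈ hspan W.hadd W.smul W.zero (Set.range v) := by
          refine ⟨[((1 : ℝ), v j)], by simp, ?_, ?_⟩
          · intro p hp
            simp only [List.mem_singleton] at hp
            rw [hp]
            exact ⟨j, rfl⟩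
          · simp only [combo, hSum, Set.mem_iUnion]
            exact ⟨v j, IH.one_smul_real W (v j), W.zero, rfl, IH.mem_hadd_zero' W (v j)⟩
        rw [hsp] at hvsp
        obtain ⟨Ml, -, hsnd, hmem⟩ := hvsp
        refine IH.combo_span W hr M Ml (v j) hmem (fun p hp => ?_)
        obtain ⟨j', hj'⟩ := hsnd p hp
        exact Submodule.subset_span ⟨j', congrArg W.inner hj'⟩
      have huM : W.inner u ∈ M := by
        refine IH.combo_span W hr M _ u hu (fun p hp => ?_)
        rw [List.mem_ofFn] at hp
        obtain ⟨j, hj⟩ := hp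
        rw [← hj]
        exact hvM j
      have hwM : W.inner (w i₀) ∈ M := by
        have h : W.inner (w i₀) = W.inner u := funext fun γ => (hwu γ).symm
        rwa [h]
      rw [hM] at hwM
      obtain ⟨b, hb⟩ := (Submodule.mem_span_range_iff_exists_fun ℝ).mp hwM
      classical
      set l : Fin n → ℝ := fun i => if h : i.1 < k then b ⟨i.1, h⟩
        else if i.1 = k then -1 else 0 with hl
      have hsum : ∀ γ, ∑ i : Fin n, l i * W.inner (w i) γ = 0 := by
        intro γ
        have hsplit : ∀ i : Fin n, l i * W.inner (w i) γ =
            (if h : i.1 < k then b ⟨i.1, h⟩ * W.inner (w i) γ else 0)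
            + (if i = i₀ then -W.inner (w i) γ else 0) := by
          intro i
          by_cases h1 : i.1 < k
          · have hne1 : i ≠ i₀ := by
              intro he
              rw [he] at h1
              exact absurd h1 (lt_irrefl k)
            simp [hl, h1, hne1]
          · by_cases h2 : i = i₀
            · have h3 : i.1 = k := by rw [h2]
              simp [hl, h1, h2, h3, hi₀]
            · have h3 : i.1 ≠ k := fun hc => h2 (Fin.ext hc)
              simp [hl, h1, h2, h3]
        rw [Finset.sum_congr rfl (fun i _ => hsplit i), Finset.sum_add_distrib]
        have hB : ∑ i : Fin n, (if i = i₀ then -W.inner (w i) γ else 0)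
            = -W.inner (w i₀) γ := by
          simp [Finset.sum_ite_eq']
        have hA : ∑ i : Fin n, (if h : i.1 < k then b ⟨i.1, h⟩ * W.inner (w i) γ else 0)
            = ∑ j : Fin k, b j * W.inner (w ⟨j.1, j.2.trans hk⟩) γ := by
          have hinj : Function.Injective (fun j : Fin k => (⟨j.1, j.2.trans hk⟩ : Fin n)) := by
            intro a b hab
            simpa [Fin.ext_iff] using hab
          rw [← Finset.sum_subset (Finset.subset_univ
            (Finset.univ.map ⟨fun j : Fin k => (⟨j.1, j.2.trans hk⟩ : Fin n), hinj⟩))]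
          · rw [Finset.sum_map]
            apply Finset.sum_congr rfl
            intro j _
            simp
          · intro i _ hi
            have : ¬ i.1 < k := by
              intro hik
              apply hi
              simp only [Finset.mem_map, Finset.mem_univ, Function.Embedding.coeFn_mk]
              exact ⟨⟨i.1, hik⟩, trivial, Fin.ext rfl⟩
            simp [this]
        rw [hA, hB]
        have hbγ := congrFun hb γ
        rw [Finset.sum_apply] at hbγ
        simp only [Pi.smul_apply, smul_eq_mul, hg] at hbγ
        linarith
      obtain ⟨x, hx⟩ := IH.combo_nonempty W (List.ofFn fun i => (l i, w i))
      have hx0 : x = W.zero := by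
        apply IH.eq_zero_of_inner W
        have h := IH.combo_exact W hr _ x hx x
        rw [List.map_ofFn, List.sum_ofFn] at h
        rw [h]
        rw [← hsum x]
        apply le_of_eq
        apply Finset.sum_congr rfl
        intro i _
        rfl
      rw [hx0] at hx
      have hcontra := hli l hx i₀
      rw [hl] at hcontra
      simp [hi₀] at hcontra
end
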